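/- The range of the occupancy measure map m : Π → ℝ^{S×A} is contained in an affine subspace of ℝ^{S×A} of dimension at most |S|·(|A|−1); equivalently, the direction (difference space) of the affine span over ℝ of the range of m has dimension at most |S|·(|A|−1). -/
import Mathlib


open scoped BigOperators

/-- A probability vector on a finite type. -/
def IsProbVec {X : Type} [Fintype X] (p : X → ℝ) : Prop :=
  (∀ x, 0 ≤ p x) ∧ ∑ x, p x = 1

/-- A (stationary) policy: a probability vector over actions for each state. -/
def Policy (S A : Type) [Fintype A] : Type :=
  {p : S → A → ℝ // ∀ s, IsProbVec (p s)}

/-- The transition matrix `P_π` induced by a policy `π` under transition function `τ`. -/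
noncomputable def Pmat {S A : Type} [Fintype S] [Fintype A]
    (τ : S → A → S → ℝ) (π : Policy S A) : Matrix S S ℝ :=
  Matrix.of fun s s' => ∑ a, π.1 s a * τ s a s'

/-- The state distribution `ι P_π^t` at time `t`. -/
noncomputable def stateDist {S A : Type} [Fintype S] [DecidableEq S] [Fintype A]
    (τ : S → A → S → ℝ) (ι : S → ℝ) (π : Policy S A) (t : ℕ) : S → ℝ :=
  Matrix.vecMul ι (Pmat τ π ^ t)

/-- The expected one-step reward `r_{R,π}`. -/
noncomputable def rvec {S A : Type} [Fintype S] [Fintype A]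
    (τ : S → A → S → ℝ) (R : S → A → S → ℝ) (π : Policy S A) (s : S) : ℝ :=
  ∑ a, π.1 s a * ∑ s', τ s a s' * R s a s'

/-- The policy evaluation function `J_R(π)`. -/
noncomputable def Jval {S A : Type} [Fintype S] [DecidableEq S] [Fintype A]
    (τ : S → A → S → ℝ) (ι : S → ℝ) (γ : ℝ) (R : S → A → S → ℝ)
    (π : Policy S A) : ℝ :=
  ∑' t : ℕ, γ ^ t * ∑ s, stateDist τ ι π t s * rvec τ R π s

/-- Every state is reachable under `τ` and `ι`. -/
def AllReachable {S A : Type} [Fintype S] [DecidableEq S] [Fintype A]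
    (τ : S → A → S → ℝ) (ι : S → ℝ) : Prop :=
  ∀ s : S, ∃ (π : Policy S A) (t : ℕ), 0 < stateDist τ ι π t s

/-- `π` is an optimal policy for `R`. -/
def IsOptimal {S A : Type} [Fintype S] [DecidableEq S] [Fintype A]
    (τ : S → A → S → ℝ) (ι : S → ℝ) (γ : ℝ) (R : S → A → S → ℝ)
    (π : Policy S A) : Prop :=
  ∀ π' : Policy S A, Jval τ ι γ R π' ≤ Jval τ ι γ R π

/-- `R₁ ≡_OPT R₂`: the same policies are optimal for `R₁` and `R₂`. -/
def EquivOPT {S A : Type} [Fintype S] [DecidableEq S] [Fintype A]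
    (τ : S → A → S → ℝ) (ι : S → ℝ) (γ : ℝ) (R₁ R₂ : S → A → S → ℝ) : Prop :=
  ∀ π : Policy S A, IsOptimal τ ι γ R₁ π ↔ IsOptimal τ ι γ R₂ π

/-- `R₁ ≡_ORD R₂`: `R₁` and `R₂` induce the same ordering of policies. -/
def EquivORD {S A : Type} [Fintype S] [DecidableEq S] [Fintype A]
    (τ : S → A → S → ℝ) (ι : S → ℝ) (γ : ℝ) (R₁ R₂ : S → A → S → ℝ) : Prop :=
  ∀ π π' : Policy S A,
    (Jval τ ι γ R₁ π' < Jval τ ι γ R₁ π ↔ Jval τ ι γ R₂ π' < Jval τ ι γ R₂ π)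

/-- `f` is `P`-admissible: `f R₁ = f R₂` implies `P R₁ R₂`. -/
def PAdmissible {R : Type*} {X : Type*} (P : R → R → Prop) (f : R → X) : Prop :=
  ∀ R₁ R₂ : R, f R₁ = f R₂ → P R₁ R₂

/-- `f` is `P`-robust to misspecification with `g`. -/
def PRobust {R : Type*} {X : Type*} (P : R → R → Prop) (f g : R → X) : Prop :=
  PAdmissible P f ∧ f ≠ g ∧ Set.range g ⊆ Set.range f ∧
    ∀ R₁ R₂ : R, f R₁ = g R₂ → P R₁ R₂

/-- The occupancy measure map `m : Π → ℝ^{S×A}`. -/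
noncomputable def occ {S A : Type} [Fintype S] [DecidableEq S] [Fintype A]
    (τ : S → A → S → ℝ) (ι : S → ℝ) (γ : ℝ) (π : Policy S A) : S × A → ℝ :=
  fun p => ∑' t : ℕ, γ ^ t * stateDist τ ι π t p.1 * π.1 p.1 p.2

section Aux

variable {S A : Type} [Fintype S] [DecidableEq S] [Fintype A]

lemma Pmat_nonneg (τ : S → A → S → ℝ) (hτ : ∀ s a, IsProbVec (τ s a))
    (π : Policy S A) (s s' : S) : 0 ≤ Pmat τ π s s' :=
  Finset.sum_nonneg fun a _ => mul_nonneg ((π.2 s).1 a) ((hτ s a).1 s')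

lemma Pmat_row_sum (τ : S → A → S → ℝ) (hτ : ∀ s a, IsProbVec (τ s a))
    (π : Policy S A) (s : S) : ∑ s', Pmat τ π s s' = 1 := by
  unfold Pmat
  simp only [Matrix.of_apply]
  rw [Finset.sum_comm]
  have h : ∀ a, ∑ s', π.1 s a * τ s a s' = π.1 s a := by
    intro a; rw [← Finset.mul_sum, (hτ s a).2, mul_one]
  simp only [h]
  exact (π.2 s).2

lemma Pmat_pow_nonneg (τ : S → A → S → ℝ) (hτ : ∀ s a, IsProbVec (τ s a))
    (π : Policy S A) (t : ℕ) (s s' : S) : 0 ≤ (Pmat τ π ^ t) s s' := by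
  induction t generalizing s s' with
  | zero =>
    simp only [pow_zero, Matrix.one_apply]
    split <;> norm_num
  | succ n ih =>
    rw [pow_succ, Matrix.mul_apply]
    exact Finset.sum_nonneg fun k _ => mul_nonneg (ih s k) (Pmat_nonneg τ hτ π k s')

lemma Pmat_pow_row_sum (τ : S → A → S → ℝ) (hτ : ∀ s a, IsProbVec (τ s a))
    (π : Policy S A) (t : ℕ) (s : S) : ∑ s', (Pmat τ π ^ t) s s' = 1 := by
  induction t generalizing s with
  | zero => simp [Matrix.one_apply]
  | succ n ih =>
    simp only [pow_succ, Matrix.mul_apply]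
    rw [Finset.sum_comm]
    have h : ∀ k, ∑ s', (Pmat τ π ^ n) s k * Pmat τ π k s' = (Pmat τ π ^ n) s k := by
      intro k; rw [← Finset.mul_sum, Pmat_row_sum τ hτ π k, mul_one]
    simp only [h]
    exact ih s

lemma stateDist_nonneg (τ : S → A → S → ℝ) (hτ : ∀ s a, IsProbVec (τ s a))
    (ι : S → ℝ) (hι : IsProbVec ι) (π : Policy S A) (t : ℕ) (s : S) :
    0 ≤ stateDist τ ι π t s := by
  unfold stateDist
  simp only [Matrix.vecMul, dotProduct]
  exact Finset.sum_nonneg fun s' _ => mul_nonneg (hι.1 s') (Pmat_pow_nonneg τ hτ π t s' s)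

lemma stateDist_le_one (τ : S → A → S → ℝ) (hτ : ∀ s a, IsProbVec (τ s a))
    (ι : S → ℝ) (hι : IsProbVec ι) (π : Policy S A) (t : ℕ) (s : S) :
    stateDist τ ι π t s ≤ 1 := by
  unfold stateDist
  simp only [Matrix.vecMul, dotProduct]
  calc ∑ s', ι s' * (Pmat τ π ^ t) s' s ≤ ∑ s', ι s' * 1 := by
        refine Finset.sum_le_sum fun s' _ => mul_le_mul_of_nonneg_left ?_ (hι.1 s')
        calc (Pmat τ π ^ t) s' s ≤ ∑ s'', (Pmat τ π ^ t) s' s'' :=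
              Finset.single_le_sum (fun k _ => Pmat_pow_nonneg τ hτ π t s' k)
                (Finset.mem_univ s)
          _ = 1 := Pmat_pow_row_sum τ hτ π t s'
    _ = 1 := by simp [hι.2]

lemma summable_sd (τ : S → A → S → ℝ) (hτ : ∀ s a, IsProbVec (τ s a))
    (ι : S → ℝ) (hι : IsProbVec ι) (γ : ℝ) (hγ0 : 0 < γ) (hγ1 : γ < 1)
    (π : Policy S A) (s : S) :
    Summable (fun t : ℕ => γ ^ t * stateDist τ ι π t s) := by
  refine Summable.of_nonneg_of_le
    (fun t => mul_nonneg (pow_nonneg hγ0.le t) (stateDist_nonneg τ hτ ι hι π t s))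
    (fun t => ?_) (summable_geometric_of_lt_one hγ0.le hγ1)
  calc γ ^ t * stateDist τ ι π t s ≤ γ ^ t * 1 :=
        mul_le_mul_of_nonneg_left (stateDist_le_one τ hτ ι hι π t s) (pow_nonneg hγ0.le t)
    _ = γ ^ t := mul_one _

lemma stateDist_succ (τ : S → A → S → ℝ) (ι : S → ℝ) (π : Policy S A) (t : ℕ) (s : S) :
    stateDist τ ι π (t + 1) s = ∑ s', stateDist τ ι π t s' * Pmat τ π s' s := by
  unfold stateDist
  rw [pow_succ, ← Matrix.vecMul_vecMul]
  simp [Matrix.vecMul, dotProduct]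

/-- The key linear constraint map. -/
noncomputable def Lmap (τ : S → A → S → ℝ) (γ : ℝ) :
    ((S × A) → ℝ) →ₗ[ℝ] (S → ℝ) where
  toFun x := fun s => ∑ a, x (s, a) - γ * ∑ p : S × A, x p * τ p.1 p.2 s
  map_add' x y := by
    funext s
    simp only [Pi.add_apply, add_mul, Finset.sum_add_distrib, mul_add]
    ring
  map_smul' c x := by
    funext s
    simp only [Pi.smul_apply, smul_eq_mul, RingHom.id_apply, mul_assoc]
    rw [← Finset.mul_sum, ← Finset.mul_sum]
    ring

lemma occ_constraint (τ : S → A → S → ℝ) (hτ : ∀ s a, IsProbVec (τ s a))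
    (ι : S → ℝ) (hι : IsProbVec ι) (γ : ℝ) (hγ0 : 0 < γ) (hγ1 : γ < 1)
    (π : Policy S A) : Lmap τ γ (occ τ ι γ π) = ι := by
  funext s
  show (∑ a, occ τ ι γ π (s, a)) - γ * ∑ p : S × A, occ τ ι γ π p * τ p.1 p.2 s = ι s
  set D : S → ℝ := fun s => ∑' t : ℕ, γ ^ t * stateDist τ ι π t s with hD
  have hocc : ∀ p : S × A, occ τ ι γ π p = D p.1 * π.1 p.1 p.2 := by
    intro p
    unfold occ
    rw [← tsum_mul_right]
  have h1 : ∑ a, occ τ ι γ π (s, a) = D s := by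
    simp only [hocc]
    rw [← Finset.mul_sum, (π.2 s).2, mul_one]
  have h2 : γ * ∑ p : S × A, occ τ ι γ π p * τ p.1 p.2 s
      = ∑' t : ℕ, γ ^ (t + 1) * stateDist τ ι π (t + 1) s := by
    simp only [hocc]
    rw [Fintype.sum_prod_type]
    have hinner : ∀ s' : S, ∑ a, D s' * π.1 s' a * τ s' a s = D s' * Pmat τ π s' s := by
      intro s'
      unfold Pmat
      simp only [Matrix.of_apply]
      rw [Finset.mul_sum]
      exact Finset.sum_congr rfl fun a _ => by ring
    simp only [hinner]
    have hterm : ∀ s' : S, γ * (D s' * Pmat τ π s' s)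
        = ∑' t : ℕ, (γ ^ t * stateDist τ ι π t s') * (γ * Pmat τ π s' s) := by
      intro s'
      rw [tsum_mul_right, hD]
      ring
    rw [Finset.mul_sum]
    calc ∑ s', γ * (D s' * Pmat τ π s' s)
        = ∑ s', ∑' t : ℕ, (γ ^ t * stateDist τ ι π t s') * (γ * Pmat τ π s' s) := by
          exact Finset.sum_congr rfl fun s' _ => hterm s'
      _ = ∑' t : ℕ, ∑ s', (γ ^ t * stateDist τ ι π t s') * (γ * Pmat τ π s' s) := by
          rw [Summable.tsum_finsetSum]
          intro s' _
          exact (summable_sd τ hτ ι hι γ hγ0 hγ1 π s').mul_right _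
      _ = ∑' t : ℕ, γ ^ (t + 1) * stateDist τ ι π (t + 1) s := by
          refine tsum_congr fun t => ?_
          rw [stateDist_succ, Finset.mul_sum, pow_succ]
          exact Finset.sum_congr rfl fun s' _ => by ring
  have h3 : D s = ι s + ∑' t : ℕ, γ ^ (t + 1) * stateDist τ ι π (t + 1) s := by
    show ∑' t : ℕ, γ ^ t * stateDist τ ι π t s
        = ι s + ∑' t : ℕ, γ ^ (t + 1) * stateDist τ ι π (t + 1) s
    rw [Summable.tsum_eq_zero_add (summable_sd τ hτ ι hι γ hγ0 hγ1 π s)]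
    congr 1
    simp [stateDist, Matrix.vecMul_one]
  rw [h1, h2, h3]
  ring

/-- Embedding of `S → ℝ` into `S × A → ℝ` supported on a fixed action. -/
noncomputable def embA (a₀ : A) [DecidableEq A] : (S → ℝ) →ₗ[ℝ] ((S × A) → ℝ) where
  toFun y := fun p => if p.2 = a₀ then y p.1 else 0
  map_add' x y := by
    funext p
    by_cases h : p.2 = a₀ <;> simp [h]
  map_smul' c x := by
    funext p
    by_cases h : p.2 = a₀ <;> simp [h]

end Aux

theorem stmt_10 {S A : Type} [Fintype S] [DecidableEq S] [Fintype A]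
    [Nonempty S] [Nonempty A]
    (τ : S → A → S → ℝ) (hτ : ∀ s a, IsProbVec (τ s a))
    (ι : S → ℝ) (hι : IsProbVec ι)
    (γ : ℝ) (hγ0 : 0 < γ) (hγ1 : γ < 1)
    (hreach : AllReachable τ ι) :
    Module.finrank ℝ (affineSpan ℝ (Set.range (occ τ ι γ))).direction ≤
      Fintype.card S * (Fintype.card A - 1) := by
  classical
  obtain ⟨a₀⟩ := ‹Nonempty A›
  set L := Lmap (S := S) (A := A) τ γ with hL
  -- the direction is contained in the kernel of L
  have hdir : (affineSpan ℝ (Set.range (occ τ ι γ))).direction ≤ LinearMap.ker L := by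
    rw [direction_affineSpan, vectorSpan_def]
    rw [Submodule.span_le]
    rintro v ⟨x, ⟨π₁, rfl⟩, y, ⟨π₂, rfl⟩, rfl⟩
    simp only [SetLike.mem_coe, LinearMap.mem_ker, vsub_eq_sub, map_sub]
    rw [occ_constraint τ hτ ι hι γ hγ0 hγ1 π₁, occ_constraint τ hτ ι hι γ hγ0 hγ1 π₂,
      sub_self]
  -- L is surjective
  have hsurj : Function.Surjective L := by
    set T : (S → ℝ) →ₗ[ℝ] (S → ℝ) := L.comp (embA a₀) with hT
    have hTval : ∀ (y : S → ℝ) (s : S),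
        T y s = y s - γ * ∑ s', y s' * τ s' a₀ s := by
      intro y s
      show (∑ a, (if a = a₀ then y s else 0))
          - γ * ∑ p : S × A, (if p.2 = a₀ then y p.1 else 0) * τ p.1 p.2 s
          = y s - γ * ∑ s', y s' * τ s' a₀ s
      rw [Fintype.sum_prod_type]
      simp [Finset.sum_ite_eq', ite_mul]
    have hTinj : Function.Injective T := by
      rw [← LinearMap.ker_eq_bot, LinearMap.ker_eq_bot']
      intro y hy
      have hys : ∀ s, y s = γ * ∑ s', y s' * τ s' a₀ s := by
        intro s
        have := congrFun hy s
        rw [hTval] at this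
        simpa [sub_eq_zero] using this
      have key : ∑ s, |y s| ≤ γ * ∑ s, |y s| := by
        calc ∑ s, |y s| = ∑ s, |γ * ∑ s', y s' * τ s' a₀ s| := by
              refine Finset.sum_congr rfl fun s _ => by rw [← hys s]
          _ ≤ ∑ s, γ * ∑ s', |y s'| * τ s' a₀ s := by
              refine Finset.sum_le_sum fun s _ => ?_
              rw [abs_mul, abs_of_pos hγ0]
              refine mul_le_mul_of_nonneg_left ?_ hγ0.le
              calc |∑ s', y s' * τ s' a₀ s| ≤ ∑ s', |y s' * τ s' a₀ s| :=
                    Finset.abs_sum_le_sum_abs _ _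
                _ = ∑ s', |y s'| * τ s' a₀ s := by
                    refine Finset.sum_congr rfl fun s' _ => ?_
                    rw [abs_mul, abs_of_nonneg ((hτ s' a₀).1 s)]
          _ = γ * ∑ s', |y s'| * ∑ s, τ s' a₀ s := by
              rw [← Finset.mul_sum, Finset.sum_comm]
              congr 1
              exact Finset.sum_congr rfl fun s' _ => (Finset.mul_sum _ _ _).symm
          _ = γ * ∑ s', |y s'| := by
              congr 1
              refine Finset.sum_congr rfl fun s' _ => ?_
              rw [(hτ s' a₀).2, mul_one]
      have hnn : 0 ≤ ∑ s, |y s| := Finset.sum_nonneg fun s _ => abs_nonneg _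
      have hzero : ∑ s, |y s| = 0 := by nlinarith
      funext s
      have := (Finset.sum_eq_zero_iff_of_nonneg
        (fun s _ => abs_nonneg (y s))).mp hzero s (Finset.mem_univ s)
      simpa [abs_eq_zero] using this
    have hTsurj : Function.Surjective T :=
      (LinearMap.injective_iff_surjective).mp hTinj
    intro z
    obtain ⟨y, hy⟩ := hTsurj z
    exact ⟨embA a₀ y, hy⟩
  -- rank computation
  have hker : Module.finrank ℝ (LinearMap.ker L)
      = Fintype.card S * Fintype.card A - Fintype.card S := by
    have hrn := LinearMap.finrank_range_add_finrank_ker L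
    rw [LinearMap.range_eq_top.mpr hsurj] at hrn
    have h1 : Module.finrank ℝ ((S × A) → ℝ) = Fintype.card S * Fintype.card A := by
      rw [Module.finrank_pi, Fintype.card_prod]
    have h2 : Module.finrank ℝ (⊤ : Submodule ℝ (S → ℝ)) = Fintype.card S := by
      rw [finrank_top, Module.finrank_pi]
    omega
  have hmono : Module.finrank ℝ (affineSpan ℝ (Set.range (occ τ ι γ))).direction
      ≤ Module.finrank ℝ (LinearMap.ker L) := Submodule.finrank_mono hdir
  obtain ⟨k, hk⟩ : ∃ k, Fintype.card A = k + 1 :=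
    ⟨Fintype.card A - 1, (Nat.succ_pred_eq_of_pos Fintype.card_pos).symm⟩
  rw [hk] at hker
  rw [hk]
  simp only [Nat.add_sub_cancel]
  have : Fintype.card S * (k + 1) = Fintype.card S * k + Fintype.card S :=
    Nat.mul_succ _ _
  omega
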